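/- For every real α > −1/2 and every λ ∈ ℝ: ∫₀^∞ t^{α−1/2} e^{−(t+λ)²/2} dt = (√π·Γ(1/2+α)/(2^{α/2+1/4}·Γ(3/4+α/2))) · ₁F₁(−α/2+1/4; 1/2; −λ²/2) − (√π·Γ(1/2+α)/(2^{α/2−1/4}·Γ(1/4+α/2))) · λ · ₁F₁(−α/2+3/4; 3/2; −λ²/2). -/

import Mathlib

noncomputable section

open MeasureTheory Real Set

/-- The rising factorial `(x)_k = x (x+1) ⋯ (x+k−1)`. -/
def risingFac (x : ℝ) : ℕ → ℝ
  | 0 => 1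
  | k + 1 => risingFac x k * (x + k)

/-- The confluent hypergeometric function `₁F₁(α;β;z) = Σ_k (α)_k/((β)_k k!) z^k`. -/
def oneF1 (α β z : ℝ) : ℝ :=
  ∑' k : ℕ, risingFac α k / (risingFac β k * (Nat.factorial k)) * z ^ k

/-!
Write `e^{-(t+λ)²/2} = e^{-λ²/2} e^{-t²/2} Σₙ (-λt)ⁿ/n!` and integrate term by term. The Gaussian
moments `∫₀^∞ t^s e^{-t²/2} dt = 2^{(s-1)/2} Γ((s+1)/2)` turn the even and the odd terms into the
series of `₁F₁(·; 1/2; λ²/2)` and `₁F₁(·; 3/2; λ²/2)`. Kummer's transformation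
`e^{-x} ₁F₁(a; b; x) = ₁F₁(b - a; b; -x)`, whose coefficient identity is a Chu–Vandermonde
convolution, moves the argument to `-λ²/2`, and Legendre's duplication formula puts the constants
in the stated form.
-/

open Finset Polynomial
open scoped Nat

lemma risingFac_eq_eval (x : ℝ) (k : ℕ) : risingFac x k = (ascPochhammer ℝ k).eval x := by
  induction k with
  | zero => simp [risingFac]
  | succ k ih => rw [risingFac, ih, ascPochhammer_succ_eval]

lemma risingFac_eq_smeval (x : ℝ) (k : ℕ) : risingFac x k = (ascPochhammer ℕ k).smeval x := by
  rw [ascPochhammer_smeval_eq_eval, risingFac_eq_eval]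

lemma risingFac_pos {x : ℝ} (hx : 0 < x) (k : ℕ) : 0 < risingFac x k := by
  rw [risingFac_eq_eval]
  exact ascPochhammer_pos k x hx

lemma risingFac_add (x : ℝ) (j m : ℕ) :
    risingFac x (j + m) = risingFac x j * risingFac (x + j) m := by
  induction m with
  | zero => simp [risingFac]
  | succ m ih =>
    rw [← add_assoc, risingFac, ih, risingFac]
    push_cast
    ring

lemma Gamma_add_natCast_eq_mul_risingFac {x : ℝ} (hx : 0 < x) (k : ℕ) :
    Gamma (x + k) = Gamma x * risingFac x k := by
  induction k with
  | zero => simp [risingFac]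
  | succ k ih =>
    rw [Nat.cast_succ, ← add_assoc, Gamma_add_one (by positivity : x + k ≠ 0), ih, risingFac]
    ring

lemma risingFac_one_half_mul_factorial (p : ℕ) :
    risingFac (1 / 2) p * p ! * 4 ^ p = (2 * p)! := by
  induction p with
  | zero => simp [risingFac]
  | succ p ih =>
    rw [show 2 * (p + 1) = 2 * p + 1 + 1 by ring, Nat.factorial_succ, Nat.factorial_succ,
      Nat.factorial_succ, risingFac]
    push_cast
    linear_combination (4 * (1 / 2 + p : ℝ) * (p + 1)) * ih

lemma risingFac_three_halves_mul_factorial (p : ℕ) :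
    risingFac (3 / 2) p * p ! * 4 ^ p = (2 * p + 1)! := by
  induction p with
  | zero => simp [risingFac]
  | succ p ih =>
    rw [show 2 * (p + 1) + 1 = 2 * p + 1 + 1 + 1 by ring, Nat.factorial_succ, Nat.factorial_succ,
      Nat.factorial_succ, risingFac]
    push_cast
    linear_combination (4 * (3 / 2 + p : ℝ) * (p + 1)) * ih

lemma descPochhammer_smeval_neg (a : ℝ) (k : ℕ) :
    (descPochhammer ℤ k).smeval (-a) = (-1) ^ k * risingFac a k := by
  rw [risingFac_eq_smeval, ← neg_neg a, ascPochhammer_smeval_neg_eq_descPochhammer, neg_neg,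
    Units.smul_def, Int.coe_negOnePow_natCast, zsmul_eq_mul]
  push_cast
  rw [← mul_assoc, ← mul_pow]
  norm_num

-- `(-1)^i (a)_i` is the falling factorial of `-a`: this is Chu–Vandermonde for falling factorials.
lemma risingFac_sub_eq_sum (a b : ℝ) (n : ℕ) :
    risingFac (b - a) n = ∑ ij ∈ antidiagonal n,
      (n.choose ij.1 : ℝ) * ((-1) ^ ij.1 * risingFac a ij.1) * risingFac (b + ij.1) ij.2 := by
  have h := Ring.descPochhammer_smeval_add n (Commute.all (-a) (b + n - 1))
  rw [show -a + (b + n - 1) = b - a + n - 1 by ring, descPochhammer_smeval_eq_ascPochhammer,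
    show b - a + n - 1 - n + 1 = b - a by ring, ← risingFac_eq_smeval] at h
  rw [h]
  refine sum_congr rfl fun ij hij => ?_
  obtain rfl : ij.1 + ij.2 = n := mem_antidiagonal.mp hij
  rw [descPochhammer_smeval_neg, descPochhammer_smeval_eq_ascPochhammer, ← risingFac_eq_smeval]
  push_cast
  ring_nf

def oneF1Term (a b x : ℝ) (k : ℕ) : ℝ :=
  risingFac a k / (risingFac b k * k !) * x ^ k

lemma oneF1_eq_tsum (a b x : ℝ) : oneF1 a b x = ∑' k, oneF1Term a b x k := rfl

lemma oneF1Term_succ {b : ℝ} (hb : 0 < b) (a x : ℝ) (k : ℕ) :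
    oneF1Term a b x (k + 1) = (a + k) * x / ((b + k) * (k + 1)) * oneF1Term a b x k := by
  have := (risingFac_pos hb k).ne'
  simp only [oneF1Term, risingFac, Nat.factorial_succ]
  push_cast
  field_simp
  ring

lemma summable_norm_oneF1Term {b : ℝ} (hb : 0 < b) (a x : ℝ) :
    Summable fun k => ‖oneF1Term a b x k‖ := by
  refine summable_of_ratio_norm_eventually_le (r := 1 / 2) (by norm_num) ?_
  filter_upwards [tendsto_natCast_atTop_atTop.eventually_ge_atTop (|a| + 4 * |x| + 1)] with k hk
  have hden : 0 < (b + k) * (k + 1) := by positivity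
  have hratio : |a + k| * |x| ≤ 1 / 2 * ((b + k) * (k + 1)) := by
    have := abs_add_le a k
    rw [Nat.abs_cast] at this
    nlinarith [abs_nonneg x, abs_nonneg a]
  have hq : ‖(a + k) * x / ((b + k) * (k + 1))‖ ≤ 1 / 2 := by
    rw [norm_div, norm_mul, Real.norm_of_nonneg hden.le, div_le_iff₀ hden]
    exact hratio
  rw [norm_norm, norm_norm, oneF1Term_succ hb, norm_mul _ (oneF1Term a b x k)]
  exact mul_le_mul_of_nonneg_right hq (norm_nonneg _)

lemma summable_oneF1Term {b : ℝ} (hb : 0 < b) (a x : ℝ) : Summable (oneF1Term a b x) :=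
  (summable_norm_oneF1Term hb a x).of_norm

lemma hasSum_pow_div_factorial_exp (x : ℝ) : HasSum (fun n => x ^ n / n !) (exp x) := by
  rw [exp_eq_exp_ℝ]
  exact NormedSpace.expSeries_div_hasSum_exp x

lemma oneF1Term_mul_pow_div_factorial {b : ℝ} (hb : 0 < b) (a x : ℝ) (i j : ℕ) :
    oneF1Term a b x i * ((-x) ^ j / j !) =
      ((i + j).choose i * ((-1) ^ i * risingFac a i) * risingFac (b + i) j) *
        ((-x) ^ (i + j) / (risingFac b (i + j) * (i + j)!)) := by
  have := (risingFac_pos hb i).ne'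
  have := (risingFac_pos (by positivity : 0 < b + i) j).ne'
  have hfac : ((i + j).choose i : ℝ) * (i ! * j !) = (i + j)! := by
    rw [Nat.choose_symm_add, ← mul_assoc]
    exact_mod_cast Nat.add_choose_mul_factorial_mul_factorial i j
  have : ((i + j).choose i : ℝ) ≠ 0 := by exact_mod_cast (Nat.choose_pos (by omega)).ne'
  have hsign : (-1) ^ i * (-x) ^ (i + j) = x ^ i * (-x) ^ j := by
    rw [pow_add, ← mul_assoc, ← mul_pow, neg_one_mul, neg_neg]
  rw [oneF1Term, risingFac_add, ← hfac]
  field_simp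
  rw [mul_assoc _ ((-1) ^ i), hsign, mul_assoc]

theorem exp_neg_mul_oneF1 {b : ℝ} (hb : 0 < b) (a x : ℝ) :
    exp (-x) * oneF1 a b x = oneF1 (b - a) b (-x) := by
  have hexp_summable : Summable fun n => ‖(-x) ^ n / (n ! : ℝ)‖ := by
    simpa [norm_div, norm_pow] using Real.summable_pow_div_factorial |x|
  rw [mul_comm, oneF1_eq_tsum, oneF1_eq_tsum, ← (hasSum_pow_div_factorial_exp (-x)).tsum_eq,
    tsum_mul_tsum_eq_tsum_sum_antidiagonal_of_summable_norm (summable_norm_oneF1Term hb a x)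
      hexp_summable]
  refine tsum_congr fun n => ?_
  rw [oneF1Term, risingFac_sub_eq_sum, sum_div, sum_mul]
  refine sum_congr rfl fun ij hij => ?_
  rw [← mem_antidiagonal.mp hij, oneF1Term_mul_pow_div_factorial hb]
  ring

def gaussianMoment (s : ℝ) : ℝ := 2 ^ ((s - 1) / 2) * Gamma ((s + 1) / 2)

lemma integrableOn_rpow_mul_exp_neg_sq_div_two {s : ℝ} (hs : -1 < s) :
    IntegrableOn (fun t : ℝ => t ^ s * exp (-t ^ 2 / 2)) (Ioi 0) := by
  convert integrableOn_rpow_mul_exp_neg_mul_sq (b := 1 / 2) (by norm_num) hs using 4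
  ring

lemma integral_rpow_mul_exp_neg_sq_div_two {s : ℝ} (hs : -1 < s) :
    ∫ t in Ioi 0, t ^ s * exp (-t ^ 2 / 2) = gaussianMoment s := by
  have h := integral_rpow_mul_exp_neg_mul_rpow (p := 2) (b := 1 / 2) (by norm_num) hs (by norm_num)
  simp only [rpow_two] at h
  rw [show (fun t : ℝ => t ^ s * exp (-t ^ 2 / 2)) = fun t => t ^ s * exp (-(1 / 2) * t ^ 2) by
    ext t; ring_nf, h, gaussianMoment, one_div, inv_rpow zero_le_two, ← rpow_neg zero_le_two,
    neg_div, neg_neg, ← rpow_neg_one 2, ← rpow_add zero_lt_two]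
  ring_nf

lemma gaussianMoment_add_two_mul {s : ℝ} (hs : -1 < s) (p : ℕ) :
    gaussianMoment (s + 2 * p) = gaussianMoment s * 2 ^ p * risingFac ((s + 1) / 2) p := by
  have hG : Gamma ((s + 2 * p + 1) / 2) = Gamma ((s + 1) / 2) * risingFac ((s + 1) / 2) p := by
    rw [← Gamma_add_natCast_eq_mul_risingFac (by linarith)]
    ring_nf
  rw [gaussianMoment, gaussianMoment, hG, show (s + 2 * p - 1) / 2 = (s - 1) / 2 + p by ring,
    rpow_add zero_lt_two, rpow_natCast]
  ring

lemma two_rpow_mul_Gamma_mul_Gamma_add_half (z : ℝ) :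
    2 ^ (2 * z - 1) * (Gamma z * Gamma (z + 1 / 2)) = √π * Gamma (2 * z) := by
  have h2 : (2 : ℝ) ^ (2 * z - 1) * 2 ^ (1 - 2 * z) = 1 := by
    rw [← rpow_add zero_lt_two]
    norm_num
  rw [Gamma_mul_Gamma_add_half]
  linear_combination (√π * Gamma (2 * z)) * h2

lemma gaussianMoment_eq_div {s : ℝ} (hs : -1 < s) :
    gaussianMoment s = √π * Gamma (s + 1) / (2 ^ ((s + 1) / 2) * Gamma (s / 2 + 1)) := by
  have hdup := two_rpow_mul_Gamma_mul_Gamma_add_half ((s + 1) / 2)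
  rw [show 2 * ((s + 1) / 2) - 1 = (s - 1) / 2 + (s + 1) / 2 by ring, rpow_add zero_lt_two,
    show (s + 1) / 2 + 1 / 2 = s / 2 + 1 by ring, show 2 * ((s + 1) / 2) = s + 1 by ring] at hdup
  have : 0 < Gamma (s / 2 + 1) := Gamma_pos_of_pos (by linarith)
  rw [eq_div_iff (by positivity), gaussianMoment, ← hdup]
  ring

lemma gaussianMoment_add_one_eq_div {s : ℝ} (hs : -1 < s) :
    gaussianMoment (s + 1) = √π * Gamma (s + 1) / (2 ^ (s / 2) * Gamma ((s + 1) / 2)) := by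
  have hdup := two_rpow_mul_Gamma_mul_Gamma_add_half ((s + 1) / 2)
  rw [show 2 * ((s + 1) / 2) - 1 = s / 2 + s / 2 by ring, rpow_add zero_lt_two,
    show (s + 1) / 2 + 1 / 2 = (s + 1 + 1) / 2 by ring,
    show 2 * ((s + 1) / 2) = s + 1 by ring] at hdup
  have : 0 < Gamma ((s + 1) / 2) := Gamma_pos_of_pos (by linarith)
  rw [eq_div_iff (by positivity), gaussianMoment, ← hdup, show s + 1 - 1 = s by ring]
  ring

lemma gaussianMoment_even_term {ν : ℝ} (hν : -1 < ν) (μ : ℝ) (p : ℕ) :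
    μ ^ (2 * p) / (2 * p)! * gaussianMoment (ν + (2 * p : ℕ)) =
      gaussianMoment ν * oneF1Term ((ν + 1) / 2) (1 / 2) (μ ^ 2 / 2) p := by
  have := (risingFac_pos one_half_pos p).ne'
  rw [Nat.cast_mul, Nat.cast_ofNat, gaussianMoment_add_two_mul hν, oneF1Term,
    ← risingFac_one_half_mul_factorial, pow_mul, div_pow,
    show (4 : ℝ) ^ p = 2 ^ p * 2 ^ p by rw [← mul_pow]; norm_num]
  field_simp

lemma gaussianMoment_odd_term {ν : ℝ} (hν : -1 < ν) (μ : ℝ) (p : ℕ) :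
    μ ^ (2 * p + 1) / (2 * p + 1)! * gaussianMoment (ν + (2 * p + 1 : ℕ)) =
      μ * gaussianMoment (ν + 1) * oneF1Term ((ν + 2) / 2) (3 / 2) (μ ^ 2 / 2) p := by
  have := (risingFac_pos (by norm_num : (0 : ℝ) < 3 / 2) p).ne'
  rw [show ν + ((2 * p + 1 : ℕ) : ℝ) = ν + 1 + 2 * p by push_cast; ring,
    gaussianMoment_add_two_mul (by linarith), oneF1Term, ← risingFac_three_halves_mul_factorial,
    pow_succ, pow_mul, div_pow, show (4 : ℝ) ^ p = 2 ^ p * 2 ^ p by rw [← mul_pow]; norm_num,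
    show (ν + 1 + 1) / 2 = (ν + 2) / 2 by ring]
  field_simp

lemma hasSum_pow_div_factorial_mul_gaussianMoment {ν : ℝ} (hν : -1 < ν) (μ : ℝ) :
    HasSum (fun n : ℕ => μ ^ n / n ! * gaussianMoment (ν + n))
      (gaussianMoment ν * oneF1 ((ν + 1) / 2) (1 / 2) (μ ^ 2 / 2) +
        μ * gaussianMoment (ν + 1) * oneF1 ((ν + 2) / 2) (3 / 2) (μ ^ 2 / 2)) := by
  refine HasSum.even_add_odd ?_ ?_
  · simp only [gaussianMoment_even_term hν]
    exact (summable_oneF1Term one_half_pos _ _).hasSum.mul_left _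
  · simp only [gaussianMoment_odd_term hν]
    exact (summable_oneF1Term (by norm_num) _ _).hasSum.mul_left _

lemma rpow_mul_exp_neg_add_sq_div_two_eq_tsum {ν t : ℝ} (ht : 0 < t) (lam : ℝ) :
    t ^ ν * exp (-(t + lam) ^ 2 / 2) =
      exp (-lam ^ 2 / 2) * ∑' n : ℕ, (-lam) ^ n / n ! * (t ^ (ν + n) * exp (-t ^ 2 / 2)) := by
  have hterm : ∀ n : ℕ, (-lam) ^ n / n ! * (t ^ (ν + n) * exp (-t ^ 2 / 2)) =
      t ^ ν * exp (-t ^ 2 / 2) * ((-lam * t) ^ n / n !) := fun n => by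
    rw [rpow_add ht, rpow_natCast, mul_pow]
    ring
  rw [tsum_congr hterm, tsum_mul_left, (hasSum_pow_div_factorial_exp _).tsum_eq,
    show -(t + lam) ^ 2 / 2 = -lam ^ 2 / 2 + (-t ^ 2 / 2 + -lam * t) by ring, exp_add, exp_add]
  ring

lemma integral_rpow_mul_exp_neg_add_sq_div_two_eq_tsum {ν : ℝ} (hν : -1 < ν) (lam : ℝ) :
    ∫ t in Ioi 0, t ^ ν * exp (-(t + lam) ^ 2 / 2) =
      exp (-lam ^ 2 / 2) * ∑' n : ℕ, (-lam) ^ n / n ! * gaussianMoment (ν + n) := by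
  set F : ℕ → ℝ → ℝ := fun n t => (-lam) ^ n / n ! * (t ^ (ν + n) * exp (-t ^ 2 / 2))
  have hν_add (n : ℕ) : -1 < ν + n := by linarith [(Nat.cast_nonneg n : (0 : ℝ) ≤ n)]
  have hF_int (n : ℕ) : Integrable (F n) (volume.restrict (Ioi 0)) :=
    (integrableOn_rpow_mul_exp_neg_sq_div_two (hν_add n)).const_mul _
  have hF_integral (n : ℕ) : ∫ t in Ioi 0, F n t = (-lam) ^ n / n ! * gaussianMoment (ν + n) := by
    rw [integral_const_mul, integral_rpow_mul_exp_neg_sq_div_two (hν_add n)]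
  have hF_norm_integral (n : ℕ) :
      ∫ t in Ioi 0, ‖F n t‖ = |lam| ^ n / n ! * gaussianMoment (ν + n) := by
    have hF_norm : ∀ t ∈ Ioi (0 : ℝ),
        ‖F n t‖ = |lam| ^ n / n ! * (t ^ (ν + n) * exp (-t ^ 2 / 2)) := fun t ht => by
      simp only [F, norm_mul, norm_div, norm_pow, norm_neg, Real.norm_eq_abs, Nat.abs_cast,
        abs_of_pos (rpow_pos_of_pos ht _), abs_of_pos (exp_pos _)]
    rw [setIntegral_congr_fun measurableSet_Ioi hF_norm, integral_const_mul,
      integral_rpow_mul_exp_neg_sq_div_two (hν_add n)]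
  have hF_sum : Summable fun n => ∫ t in Ioi 0, ‖F n t‖ := by
    simp only [hF_norm_integral]
    exact (hasSum_pow_div_factorial_mul_gaussianMoment hν |lam|).summable
  rw [setIntegral_congr_fun measurableSet_Ioi fun t ht =>
      rpow_mul_exp_neg_add_sq_div_two_eq_tsum ht lam, integral_const_mul,
    ← (hasSum_integral_of_summable_integral_norm hF_int hF_sum).tsum_eq]
  simp only [hF_integral]

theorem integral_rpow_mul_exp_neg_add_sq_div_two {s : ℝ} (hs : -1 < s) (lam : ℝ) :
    ∫ t in Ioi 0, t ^ s * exp (-(t + lam) ^ 2 / 2) =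
      gaussianMoment s * oneF1 (-s / 2) (1 / 2) (-lam ^ 2 / 2) -
        gaussianMoment (s + 1) * lam * oneF1 ((1 - s) / 2) (3 / 2) (-lam ^ 2 / 2) := by
  have hkummer₁ := exp_neg_mul_oneF1 one_half_pos ((s + 1) / 2) (lam ^ 2 / 2)
  have hkummer₂ := exp_neg_mul_oneF1 (by norm_num : (0 : ℝ) < 3 / 2) ((s + 2) / 2) (lam ^ 2 / 2)
  rw [show 1 / 2 - (s + 1) / 2 = -s / 2 by ring, ← neg_div] at hkummer₁
  rw [show 3 / 2 - (s + 2) / 2 = (1 - s) / 2 by ring, ← neg_div] at hkummer₂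
  rw [integral_rpow_mul_exp_neg_add_sq_div_two_eq_tsum hs,
    (hasSum_pow_div_factorial_mul_gaussianMoment hs (-lam)).tsum_eq, neg_sq, ← hkummer₁,
    ← hkummer₂]
  ring

theorem parabolic_cylinder_conf_hypergeometric (α lam : ℝ) (hα : -(1 / 2) < α) :
    (∫ t in Set.Ioi (0 : ℝ), t ^ (α - 1 / 2) * Real.exp (-(t + lam) ^ 2 / 2)) =
      (Real.sqrt Real.pi * Real.Gamma (1 / 2 + α) /
          (2 ^ (α / 2 + 1 / 4) * Real.Gamma (3 / 4 + α / 2))) *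
          oneF1 (-α / 2 + 1 / 4) (1 / 2) (-lam ^ 2 / 2) -
        (Real.sqrt Real.pi * Real.Gamma (1 / 2 + α) /
            (2 ^ (α / 2 - 1 / 4) * Real.Gamma (1 / 4 + α / 2))) *
          lam * oneF1 (-α / 2 + 3 / 4) (3 / 2) (-lam ^ 2 / 2) := by
  have hs : -1 < α - 1 / 2 := by linarith
  rw [integral_rpow_mul_exp_neg_add_sq_div_two hs, gaussianMoment_eq_div hs,
    gaussianMoment_add_one_eq_div hs]
  ring_nf
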